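/- Let γ > 0 and φ ∈ C([0,1]). The spectrum of ℒ(ξ, ξ°) = (ξ° − ξ + γ𝒦ξ, 0) on L²(0,1) × ℝ intersects the open right half-plane {Re λ > 0} in at most finitely many points, all of which are real eigenvalues. -/

import Mathlib

/-!
Writing `ℒ(ξ, a) = (a • 1 - ξ + γ𝒦ξ, 0)`, the operator `λ - ℒ` is block upper triangular with
diagonal blocks `(1 + λ) - γ𝒦` and `λ`; so for `λ ≠ 0`, `λ ∈ σ(ℒ)` forces `1 + λ ∈ σ(γ𝒦)`, and an
eigenvector `ξ` of `γ𝒦` for `1 + λ` gives the eigenvector `(ξ, 0)` of `ℒ` for `λ`.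

The kernel is `K(s, ζ) = g (max s ζ)` with `g t = ∫ σ in t..1, cos (φ σ)` `1`-Lipschitz, so it is
continuous, symmetric and Lipschitz in `s`. Hence `𝒦` is self-adjoint (Fubini) and compact: the
images of the unit ball are equi-Lipschitz and equibounded continuous functions (Arzelà–Ascoli).
By the Fredholm alternative every nonzero spectral point of the compact operator `γ𝒦` is an
eigenvalue; unit eigenvectors of distinct eigenvalues of norm `≥ c > 0` are orthogonal, so their
images are pairwise `c`-separated inside a compact set, and only finitely many such eigenvalues
exist.
-/

open MeasureTheory Set

/-- The measure of the interval `[0,1]`, underlying the space `L²(0,1)`. -/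
noncomputable def μ01 : Measure ℝ := volume.restrict (Icc (0:ℝ) 1)

open Filter Function Module End
open scoped BoundedContinuousFunction

section CompactSymmetric

variable {𝕜 E : Type*} [RCLike 𝕜] [NormedAddCommGroup E] [InnerProductSpace 𝕜 E]

theorem norm_smul_sub_smul_sq_of_inner_eq_zero {x y : E} (hx : ‖x‖ = 1) (hy : ‖y‖ = 1)
    (hxy : inner 𝕜 x y = 0) (a b : 𝕜) : ‖a • x - b • y‖ ^ 2 = ‖a‖ ^ 2 + ‖b‖ ^ 2 := by
  rw [@norm_sub_sq 𝕜, inner_smul_left, inner_smul_right, hxy, norm_smul, norm_smul, hx, hy]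
  simp

theorem IsCompactOperator.finite_spectrum_sep_le_norm [CompleteSpace E] {T : E →L[𝕜] E}
    (hT : IsCompactOperator T) (hTs : (T : E →ₗ[𝕜] E).IsSymmetric) {c : ℝ} (hc : 0 < c) :
    {μ ∈ spectrum 𝕜 T | c ≤ ‖μ‖}.Finite := by
  by_contra hinf
  set μ := Set.Infinite.natEmbedding _ hinf
  have hμ0 (n : ℕ) : (μ n : 𝕜) ≠ 0 := norm_pos_iff.1 (hc.trans_le (μ n).2.2)
  have hunit (n : ℕ) : ∃ v ∈ eigenspace (T : E →ₗ[𝕜] E) (μ n), ‖v‖ = 1 := by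
    obtain ⟨v, hv, hv0⟩ :=
      ((hT.hasEigenvalue_iff_mem_spectrum (hμ0 n)).2 (μ n).2.1).exists_hasEigenvector
    exact ⟨(‖v‖⁻¹ : 𝕜) • v, Submodule.smul_mem _ _ hv, norm_smul_inv_norm hv0⟩
  choose v hv hv1 using hunit
  have hsep {m n : ℕ} (hmn : m ≠ n) : c ≤ ‖T (v m) - T (v n)‖ := by
    have horth : inner 𝕜 (v m) (v n) = 0 :=
      hTs.orthogonalFamily_eigenspaces (fun h => hmn (μ.injective (Subtype.ext h)))
        ⟨v m, hv m⟩ ⟨v n, hv n⟩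
    have hTv (k : ℕ) : T (v k) = (μ k : 𝕜) • v k := mem_eigenspace_iff.1 (hv k)
    rw [hTv, hTv]
    refine le_of_pow_le_pow_left₀ two_ne_zero (norm_nonneg _) ?_
    rw [norm_smul_sub_smul_sq_of_inner_eq_zero (hv1 m) (hv1 n) horth]
    nlinarith [(μ m).2.2, (μ n).2.2]
  obtain ⟨K, hK, hTK⟩ := hT.image_closedBall_subset_compact 1
  obtain ⟨y, -, ψ, hψ, hlim⟩ := hK.tendsto_subseq fun n => hTK ⟨v n, by simp [hv1], rfl⟩
  obtain ⟨N, hN⟩ := Metric.cauchySeq_iff'.1 hlim.cauchySeq c hc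
  refine (hN (N + 1) N.le_succ).not_ge ?_
  rw [dist_eq_norm]
  exact hsep (hψ.injective.ne N.succ_ne_self)

end CompactSymmetric

section BlockTriangular

variable {𝕜 H : Type*} [NontriviallyNormedField 𝕜] [NormedAddCommGroup H] [NormedSpace 𝕜 H]
  {T : H →L[𝕜] H} {L : H × 𝕜 →L[𝕜] H × 𝕜} {e : H}

theorem one_add_mem_spectrum_of_mem_spectrum [CompleteSpace 𝕜] [CompleteSpace H]
    (hL : ∀ v, L v = (v.2 • e - v.1 + T v.1, 0)) {lam : 𝕜} (hlam : lam ≠ 0)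
    (h : lam ∈ spectrum 𝕜 L) : 1 + lam ∈ spectrum 𝕜 T := by
  set S := algebraMap 𝕜 (H →L[𝕜] H) (1 + lam) - T
  have hS (x : H) : S x = (1 + lam) • x - T x := by simp [S, Algebra.algebraMap_eq_smul_one]
  have hSL (v : H × 𝕜) : (algebraMap 𝕜 _ lam - L) v = (S v.1 - v.2 • e, lam * v.2) := by
    simp only [sub_apply, Algebra.algebraMap_eq_smul_one, hL, hS]
    ext
    · simp only [smul_apply, one_apply_eq_self, Prod.fst_sub, Prod.smul_fst]; module
    · simp
  rw [spectrum.mem_iff, ContinuousLinearMap.isUnit_iff_bijective] at h ⊢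
  contrapose! h
  refine ⟨(injective_iff_map_eq_zero _).2 fun v hv => ?_, fun w => ?_⟩
  · rw [hSL, Prod.mk_eq_zero, mul_eq_zero] at hv
    have hv2 : v.2 = 0 := hv.2.resolve_left hlam
    rw [hv2, zero_smul, sub_zero] at hv
    exact Prod.ext ((injective_iff_map_eq_zero _).1 h.1 _ hv.1) hv2
  · obtain ⟨x, hx⟩ := h.2 (w.1 + (lam⁻¹ * w.2) • e)
    refine ⟨(x, lam⁻¹ * w.2), ?_⟩
    rw [hSL, hx, add_sub_cancel_right, mul_inv_cancel_left₀ hlam]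

theorem apply_eq_smul_of_apply_eq_one_add_smul (hL : ∀ v, L v = (v.2 • e - v.1 + T v.1, 0))
    {lam : 𝕜} {x : H} (hx : T x = (1 + lam) • x) : L (x, 0) = lam • (x, 0) := by
  rw [hL, hx, Prod.smul_mk, smul_zero]
  ext
  · simp only [zero_smul, zero_sub]; module
  · simp

end BlockTriangular

theorem lipschitzWith_intervalIntegral_left {f : ℝ → ℝ} {C : NNReal} (hf : Continuous f)
    (hC : ∀ x, ‖f x‖ ≤ C) (b : ℝ) : LipschitzWith C fun t => ∫ σ in t..b, f σ := by
  refine LipschitzWith.of_dist_le_mul fun s t => ?_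
  have hdiff : (∫ σ in s..b, f σ) - ∫ σ in t..b, f σ = ∫ σ in s..t, f σ :=
    sub_eq_of_eq_add (intervalIntegral.integral_add_adjacent_intervals
      (hf.intervalIntegrable _ _) (hf.intervalIntegrable _ _)).symm
  rw [dist_eq_norm, hdiff, Real.dist_eq, abs_sub_comm]
  exact intervalIntegral.norm_integral_le_of_norm_le_const fun x _ => hC x

namespace MeasureTheory.Lp

variable {α : Type*} {m : MeasurableSpace α} {μ : Measure α} [IsProbabilityMeasure μ]
  {p : ENNReal}

theorem integral_norm_le_norm {E : Type*} [NormedAddCommGroup E] (hp : 1 ≤ p) (u : Lp E p μ) :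
    ∫ x, ‖u x‖ ∂μ ≤ ‖u‖ := by
  rw [integral_norm_eq_lintegral_enorm (Lp.aestronglyMeasurable u),
    ← eLpNorm_one_eq_lintegral_enorm, Lp.norm_def]
  exact ENNReal.toReal_mono (Lp.eLpNorm_ne_top u)
    (eLpNorm_le_eLpNorm_of_exponent_le hp (Lp.aestronglyMeasurable u))

theorem norm_integral_mul_le (hp : 1 ≤ p) {k : α → ℝ} {M : ℝ} (hkM : ∀ᵐ x ∂μ, ‖k x‖ ≤ M)
    (u : Lp ℝ p μ) : ‖∫ x, k x * u x ∂μ‖ ≤ M * ‖u‖ := by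
  obtain ⟨x, hx⟩ := hkM.exists
  calc ‖∫ x, k x * u x ∂μ‖ ≤ ∫ x, M * ‖u x‖ ∂μ := by
        refine norm_integral_le_of_norm_le (((Lp.memLp u).integrable hp).norm.const_mul M) ?_
        filter_upwards [hkM] with x hx
        rw [norm_mul]
        exact mul_le_mul_of_nonneg_right hx (norm_nonneg _)
    _ = M * ∫ x, ‖u x‖ ∂μ := integral_const_mul _ _
    _ ≤ M * ‖u‖ := mul_le_mul_of_nonneg_left (integral_norm_le_norm hp u)
        ((norm_nonneg _).trans hx)

end MeasureTheory.Lp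

instance : IsProbabilityMeasure μ01 :=
  ⟨by rw [μ01, Measure.restrict_apply_univ, Real.volume_Icc]; norm_num⟩

theorem intervalIntegral_zero_one_eq_integral_μ01 (f : ℝ → ℝ) :
    ∫ x in (0:ℝ)..1, f x = ∫ x, f x ∂μ01 := by
  rw [intervalIntegral.integral_of_le zero_le_one, μ01, integral_Icc_eq_integral_Ioc]

-- The constant extension outside `[0,1]` is invisible to `μ01`.
noncomputable def extendToL2 (f : Icc (0:ℝ) 1 →ᵇ ℝ) : Lp ℝ 2 μ01 :=
  BoundedContinuousFunction.toLp 2 μ01 ℝ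
    (f.compContinuous ⟨projIcc 0 1 zero_le_one, continuous_projIcc⟩)

theorem continuous_extendToL2 : Continuous extendToL2 :=
  (BoundedContinuousFunction.toLp 2 μ01 ℝ).continuous.comp
    (BoundedContinuousFunction.continuous_compContinuous _)

theorem extendToL2_ae_eq (f : Icc (0:ℝ) 1 →ᵇ ℝ) :
    ∀ᵐ s ∂μ01, ∀ hs : s ∈ Icc (0:ℝ) 1, extendToL2 f s = f ⟨s, hs⟩ := by
  filter_upwards [BoundedContinuousFunction.coeFn_toLp (E := ℝ) 2 μ01 ℝ (f.compContinuous _)]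
    with s hs h01
  rw [extendToL2, hs, BoundedContinuousFunction.compContinuous_apply]
  exact congrArg f (projIcc_of_mem zero_le_one h01)

section KernelIntegral

variable {K : ℝ → ℝ → ℝ}

theorem integrable_kernel_mul (hK : Continuous (uncurry K)) (u : Lp ℝ 2 μ01) (s : ℝ) :
    Integrable (fun ζ => K s ζ * u ζ) μ01 := by
  have hKs : Continuous (K s) := hK.comp (Continuous.prodMk_right s)
  obtain ⟨M, hM⟩ := (isCompact_Icc (a := (0:ℝ)) (b := 1)).exists_bound_of_continuousOn
    hKs.continuousOn
  refine ((Lp.memLp u).integrable one_le_two).bdd_mul (c := M) hKs.aestronglyMeasurable ?_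
  filter_upwards [ae_restrict_mem measurableSet_Icc] with ζ hζ using hM ζ hζ

theorem lipschitzWith_integral_kernel_mul (hK : Continuous (uncurry K)) {C : NNReal}
    (hKlip : ∀ ζ, LipschitzWith C (K · ζ)) (u : Lp ℝ 2 μ01) :
    LipschitzWith (C * ‖u‖₊) fun s => ∫ ζ, K s ζ * u ζ ∂μ01 := by
  refine LipschitzWith.of_dist_le_mul fun s t => ?_
  rw [dist_eq_norm, ← integral_sub (integrable_kernel_mul hK u s) (integrable_kernel_mul hK u t)]
  simp_rw [← sub_mul]
  calc _ ≤ C * dist s t * ‖u‖ := Lp.norm_integral_mul_le one_le_two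
        (ae_of_all _ fun ζ => by rw [← dist_eq_norm]; exact (hKlip ζ).dist_le_mul s t) u
    _ = _ := by push_cast; ring

theorem integrable_kernel_mul_prod (hK : Continuous (uncurry K)) (u v : Lp ℝ 2 μ01) :
    Integrable (fun p : ℝ × ℝ => K p.1 p.2 * u p.2 * v p.1) (μ01.prod μ01) := by
  obtain ⟨M, hM⟩ := (isCompact_Icc.prod isCompact_Icc).exists_bound_of_continuousOn
    hK.continuousOn
  have hUV : Integrable (fun p : ℝ × ℝ => u p.2 * v p.1) (μ01.prod μ01) :=
    (((Lp.memLp v).integrable one_le_two).mul_prod ((Lp.memLp u).integrable one_le_two)).congr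
      (ae_of_all _ fun p => mul_comm _ _)
  have hsq : ∀ᵐ p ∂μ01.prod μ01, p ∈ Icc (0:ℝ) 1 ×ˢ Icc (0:ℝ) 1 := by
    rw [μ01, Measure.prod_restrict]
    exact ae_restrict_mem (measurableSet_Icc.prod measurableSet_Icc)
  simp_rw [mul_assoc]
  exact hUV.bdd_mul (c := M) hK.aestronglyMeasurable
    (by filter_upwards [hsq] with p hp using hM p hp)

end KernelIntegral

def HasKernel (K : ℝ → ℝ → ℝ) (𝒦 : Lp ℝ 2 μ01 →L[ℝ] Lp ℝ 2 μ01) : Prop :=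
  ∀ u : Lp ℝ 2 μ01, ⇑(𝒦 u) =ᵐ[μ01] fun s => ∫ ζ, K s ζ * u ζ ∂μ01

namespace HasKernel

variable {K : ℝ → ℝ → ℝ} {𝒦 : Lp ℝ 2 μ01 →L[ℝ] Lp ℝ 2 μ01}

theorem isCompactOperator (h𝒦 : HasKernel K 𝒦) (hK : Continuous (uncurry K)) {C : NNReal}
    (hKlip : ∀ ζ, LipschitzWith C (K · ζ)) : IsCompactOperator 𝒦 := by
  obtain ⟨M, hM⟩ := (isCompact_Icc.prod isCompact_Icc).exists_bound_of_continuousOn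
    hK.continuousOn
  let A : Set (Icc (0:ℝ) 1 →ᵇ ℝ) := {f | LipschitzWith C f ∧ ∀ x, f x ∈ Metric.closedBall 0 M}
  have hA : IsCompact (closure A) :=
    BoundedContinuousFunction.arzela_ascoli _ (isCompact_closedBall 0 M) A (fun f x hf => hf.2 x)
      (Metric.equicontinuous_of_continuity_modulus (C * ·)
        ((continuous_const_mul (C : ℝ)).tendsto' 0 0 (mul_zero _)) _
        fun x y f => f.2.1.dist_le_mul x y)
  refine ⟨extendToL2 '' closure A, hA.image continuous_extendToL2,
    mem_of_superset (Metric.ball_mem_nhds 0 one_pos) fun u hu => ?_⟩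
  rw [mem_ball_zero_iff] at hu
  have hlip := (lipschitzWith_integral_kernel_mul hK hKlip u).comp
    (LipschitzWith.subtype_val (Icc (0:ℝ) 1))
  let f : Icc (0:ℝ) 1 →ᵇ ℝ := .mkOfCompact ⟨_, hlip.continuous⟩
  have hfA : f ∈ A := by
    refine ⟨hlip.weaken ?_, fun s => ?_⟩
    · rw [mul_one]
      exact mul_le_of_le_one_right (by positivity)
        (by rw [← NNReal.coe_le_coe]; simpa using hu.le)
    · have hMs : ∀ᵐ ζ ∂μ01, ‖K s ζ‖ ≤ M := by
        filter_upwards [ae_restrict_mem measurableSet_Icc] with ζ hζ using hM (s, ζ) ⟨s.2, hζ⟩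
      have hM0 : 0 ≤ M := (norm_nonneg _).trans (hM (s, s) ⟨s.2, s.2⟩)
      rw [mem_closedBall_zero_iff]
      exact (Lp.norm_integral_mul_le one_le_two hMs u).trans (mul_le_of_le_one_right hM0 hu.le)
  refine ⟨f, subset_closure hfA, Lp.ext ?_⟩
  filter_upwards [extendToL2_ae_eq f, h𝒦 u, ae_restrict_mem measurableSet_Icc]
    with s hf h𝒦s hs
  rw [hf hs, h𝒦s]
  rfl

theorem inner_eq_integral_prod (h𝒦 : HasKernel K 𝒦) (hK : Continuous (uncurry K))
    (u v : Lp ℝ 2 μ01) :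
    inner ℝ (𝒦 u) v = ∫ p : ℝ × ℝ, K p.1 p.2 * u p.2 * v p.1 ∂μ01.prod μ01 := by
  rw [integral_prod _ (integrable_kernel_mul_prod hK u v), L2.inner_def]
  refine integral_congr_ae ?_
  filter_upwards [h𝒦 u] with s hs
  rw [hs, Real.inner_apply, ← integral_mul_const]

theorem isSymmetric (h𝒦 : HasKernel K 𝒦) (hK : Continuous (uncurry K))
    (hKsymm : ∀ s ζ, K s ζ = K ζ s) : (𝒦 : Lp ℝ 2 μ01 →ₗ[ℝ] Lp ℝ 2 μ01).IsSymmetric := by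
  intro u v
  rw [ContinuousLinearMap.coe_coe, real_inner_comm (𝒦 v), inner_eq_integral_prod h𝒦 hK,
    inner_eq_integral_prod h𝒦 hK, ← integral_prod_swap]
  refine integral_congr_ae (ae_of_all _ fun p => ?_)
  simp only [Prod.fst_swap, Prod.snd_swap]
  rw [hKsymm]
  ring

end HasKernel

theorem apply_eq_prod_of_ae_eq {γ : ℝ} {𝒦 : Lp ℝ 2 μ01 →L[ℝ] Lp ℝ 2 μ01}
    {L : (Lp ℝ 2 μ01 × ℝ) →L[ℝ] (Lp ℝ 2 μ01 × ℝ)}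
    (hL1 : ∀ v : Lp ℝ 2 μ01 × ℝ, ⇑((L v).1) =ᵐ[μ01] fun s => v.2 - v.1 s + γ * (𝒦 v.1) s)
    (hL2 : ∀ v : Lp ℝ 2 μ01 × ℝ, (L v).2 = 0) (v : Lp ℝ 2 μ01 × ℝ) :
    L v = (v.2 • Lp.const 2 μ01 (1 : ℝ) - v.1 + (γ • 𝒦) v.1, 0) := by
  refine Prod.ext (Lp.ext ?_) (hL2 v)
  filter_upwards [hL1 v, Lp.coeFn_add (v.2 • Lp.const 2 μ01 (1 : ℝ) - v.1) ((γ • 𝒦) v.1),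
    Lp.coeFn_sub (v.2 • Lp.const 2 μ01 (1 : ℝ)) v.1,
    Lp.coeFn_smul v.2 (Lp.const 2 μ01 (1 : ℝ)), Lp.coeFn_smul γ (𝒦 v.1),
    Lp.coeFn_const 2 μ01 (1 : ℝ)] with s h1 h2 h3 h4 h5 h6
  rw [h1, h2, Pi.add_apply, h3, Pi.sub_apply, h4, Pi.smul_apply, h6, smul_apply, h5,
    Pi.smul_apply]
  simp

theorem stmt_6_general (φ : ℝ → ℝ) (hφ : Continuous φ) (γ : ℝ)
    (K : ℝ → ℝ → ℝ)
    (hK : ∀ s ζ, K s ζ = ∫ σ in max s ζ..1, Real.cos (φ σ))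
    (𝒦 : Lp ℝ 2 μ01 →L[ℝ] Lp ℝ 2 μ01)
    (h𝒦 : ∀ u : Lp ℝ 2 μ01, ⇑(𝒦 u) =ᵐ[μ01] fun s => ∫ ζ in (0:ℝ)..1, K s ζ * u ζ)
    (L : (Lp ℝ 2 μ01 × ℝ) →L[ℝ] (Lp ℝ 2 μ01 × ℝ))
    (hL1 : ∀ v : Lp ℝ 2 μ01 × ℝ,
      ⇑((L v).1) =ᵐ[μ01] fun s => v.2 - v.1 s + γ * (𝒦 v.1) s)
    (hL2 : ∀ v : Lp ℝ 2 μ01 × ℝ, (L v).2 = 0) :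
    ({lam ∈ spectrum ℝ L | 0 < lam}).Finite ∧
    (∀ lam ∈ spectrum ℝ L, 0 < lam →
      ∃ v : Lp ℝ 2 μ01 × ℝ, v ≠ 0 ∧ L v = lam • v) := by
  set g : ℝ → ℝ := fun t => ∫ σ in t..1, Real.cos (φ σ)
  have hg : LipschitzWith 1 g := lipschitzWith_intervalIntegral_left
    (Real.continuous_cos.comp hφ) (fun σ => by simpa using Real.abs_cos_le_one (φ σ)) 1
  obtain rfl : K = fun s ζ => g (max s ζ) := funext₂ hK
  have hK𝒦 : HasKernel _ 𝒦 := fun u => by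
    simpa only [intervalIntegral_zero_one_eq_integral_μ01] using h𝒦 u
  have hKc : Continuous (uncurry fun s ζ => g (max s ζ)) :=
    hg.continuous.comp (continuous_fst.max continuous_snd)
  set T : Lp ℝ 2 μ01 →L[ℝ] Lp ℝ 2 μ01 := γ • 𝒦
  have hTc : IsCompactOperator T := (hK𝒦.isCompactOperator hKc fun ζ =>
    (hg.comp (LipschitzWith.id.max_const ζ)).weaken (mul_one 1).le).smul γ
  have hTs : (T : Lp ℝ 2 μ01 →ₗ[ℝ] Lp ℝ 2 μ01).IsSymmetric :=
    (hK𝒦.isSymmetric hKc fun s ζ => by rw [max_comm]).smul (conj_trivial γ)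
  have hL := apply_eq_prod_of_ae_eq hL1 hL2
  have hspec (lam : ℝ) (h : lam ∈ spectrum ℝ L) (hlam : 0 < lam) : 1 + lam ∈ spectrum ℝ T :=
    one_add_mem_spectrum_of_mem_spectrum hL hlam.ne' h
  refine ⟨?_, fun lam h hlam => ?_⟩
  · refine ((hTc.finite_spectrum_sep_le_norm hTs one_pos).image (· - 1)).subset ?_
    rintro lam ⟨h, hlam⟩
    refine ⟨1 + lam, ⟨hspec lam h hlam, ?_⟩, add_sub_cancel_left 1 lam⟩
    rw [Real.norm_eq_abs, abs_of_pos (by positivity)]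
    linarith
  · obtain ⟨x, hx, hx0⟩ := ((hTc.hasEigenvalue_iff_mem_spectrum (by positivity)).2
      (hspec lam h hlam)).exists_hasEigenvector
    exact ⟨(x, 0), fun h0 => hx0 (congrArg Prod.fst h0),
      apply_eq_smul_of_apply_eq_one_add_smul hL (mem_eigenspace_iff.1 hx)⟩

/-- the spectrum of `ℒ(ξ, ξ°) = (ξ° − ξ + γ𝒦ξ, 0)` on `L²(0,1) × ℝ`
meets the open right half-plane in at most finitely many points, each of which is a
(real) eigenvalue. -/
theorem stmt_6 (φ : ℝ → ℝ) (hφ : Continuous φ) (γ : ℝ) (hγ : 0 < γ)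
    (K : ℝ → ℝ → ℝ)
    (hK : ∀ s ζ, K s ζ = ∫ σ in max s ζ..1, Real.cos (φ σ))
    (𝒦 : Lp ℝ 2 μ01 →L[ℝ] Lp ℝ 2 μ01)
    (h𝒦 : ∀ u : Lp ℝ 2 μ01, ⇑(𝒦 u) =ᵐ[μ01] fun s => ∫ ζ in (0:ℝ)..1, K s ζ * u ζ)
    (L : (Lp ℝ 2 μ01 × ℝ) →L[ℝ] (Lp ℝ 2 μ01 × ℝ))
    (hL1 : ∀ v : Lp ℝ 2 μ01 × ℝ,
      ⇑((L v).1) =ᵐ[μ01] fun s => v.2 - v.1 s + γ * (𝒦 v.1) s)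
    (hL2 : ∀ v : Lp ℝ 2 μ01 × ℝ, (L v).2 = 0) :
    ({lam ∈ spectrum ℝ L | 0 < lam}).Finite ∧
    (∀ lam ∈ spectrum ℝ L, 0 < lam →
      ∃ v : Lp ℝ 2 μ01 × ℝ, v ≠ 0 ∧ L v = lam • v) :=
  stmt_6_general φ hφ γ K hK 𝒦 h𝒦 L hL1 hL2
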